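/- Let q ∈ A ⊗_k S, written q = Σ_i a_i ⊗ s_i, be invertible in the algebra A^op ⊗_k S, i.e. there exists q̄ = Σ_j ā_j ⊗ s̄_j ∈ A ⊗_k S with Σ_{i,j} a_i ā_j ⊗ s̄_j s_i = Σ_{i,j} ā_j a_i ⊗ s_i s̄_j = 1_A ⊗ 1_S. Then the following assertions are equivalent: (1) q ∈ Q, i.e. for all t ∈ S: Σ_i (a_i)_R ⊗ t_R s_i = χ(t)·q; (2) for all t ∈ S: Σ_{i,j} (a_j)_R ā_i ⊗ s̄_i t_R s_j = χ(t)·(1_A ⊗ 1_S); (3) for all t ∈ S: Σ_j χ(t_R)(ā_j)_R ⊗ s̄_j = Σ_j ā_j ⊗ s̄_j t. (If such an invertible q ∈ Q exists, (A,S,R,χ) is called a cleft factorization structure.) -/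
import Mathlib


open TensorProduct

noncomputable section

variable {k A S : Type*} [CommRing k] [Ring A] [Algebra k A] [Ring S] [Algebra k S]

/-- The map `S ⊗ (A ⊗ S) → A ⊗ S`, `s ⊗ (b ⊗ t) ↦ b_R ⊗ s_R t`. -/
def factInner (R : S ⊗[k] A →ₗ[k] A ⊗[k] S) : S ⊗[k] (A ⊗[k] S) →ₗ[k] A ⊗[k] S :=
  LinearMap.lTensor A (LinearMap.mul' k S) ∘ₗ (TensorProduct.assoc k A S S).toLinearMap ∘ₗ
    LinearMap.rTensor S R ∘ₗ (TensorProduct.assoc k S A S).symm.toLinearMap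

/-- The smash product multiplication on `A ⊗ S`:
`(a ⊗ s)(b ⊗ t) = a b_R ⊗ s_R t`. -/
def factMul (R : S ⊗[k] A →ₗ[k] A ⊗[k] S) (x y : A ⊗[k] S) : A ⊗[k] S :=
  (LinearMap.rTensor S (LinearMap.mul' k A) ∘ₗ (TensorProduct.assoc k A A S).symm.toLinearMap ∘ₗ
    LinearMap.lTensor A (factInner R) ∘ₗ (TensorProduct.assoc k A S (A ⊗[k] S)).toLinearMap)
    (x ⊗ₜ[k] y)

/-- For `b : A`, the map `A ⊗ S → A ⊗ S`, `a ⊗ s ↦ a b_r ⊗ s_r`. -/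
def factInner2 (R : S ⊗[k] A →ₗ[k] A ⊗[k] S) (b : A) : A ⊗[k] S →ₗ[k] A ⊗[k] S :=
  LinearMap.rTensor S (LinearMap.mul' k A) ∘ₗ (TensorProduct.assoc k A A S).symm.toLinearMap ∘ₗ
    LinearMap.lTensor A (R ∘ₗ (TensorProduct.mk k S A).flip b)

/-- The multiplication of `A^op ⊗ S` on the module `A ⊗ S`:
`(a ⊗ s)(b ⊗ t) = b a ⊗ s t`. -/
def opMul : (A ⊗[k] S) ⊗[k] (A ⊗[k] S) →ₗ[k] A ⊗[k] S :=
  TensorProduct.map (LinearMap.mul' k A ∘ₗ (TensorProduct.comm k A A).toLinearMap)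
      (LinearMap.mul' k S) ∘ₗ
    (TensorProduct.tensorTensorTensorComm k A S A S).toLinearMap

/-- `q ∈ Q` iff `Σ (a_i)_R ⊗ t_R s_i = χ(t) q` for all `t`. -/
def factQCond (R : S ⊗[k] A →ₗ[k] A ⊗[k] S) (χ : S →ₐ[k] k) (q : A ⊗[k] S) : Prop :=
  ∀ t : S, factInner R (t ⊗ₜ[k] q) = χ t • q

/-- For `t : S`, the map `A → A`, `b ↦ χ(t_R) b_R` where `R(t ⊗ b) = b_R ⊗ t_R`. -/
def factPhi (R : S ⊗[k] A →ₗ[k] A ⊗[k] S) (χ : S →ₐ[k] k) (t : S) : A →ₗ[k] A :=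
  (TensorProduct.rid k A).toLinearMap ∘ₗ LinearMap.lTensor A χ.toLinearMap ∘ₗ
    R ∘ₗ TensorProduct.mk k S A t

section Aux

variable (R : S ⊗[k] A →ₗ[k] A ⊗[k] S) (χ : S →ₐ[k] k)

local notation "E" => (TensorProduct.congr (MulOpposite.opLinearEquiv k : A ≃ₗ[k] Aᵐᵒᵖ)
  (LinearEquiv.refl k S) : A ⊗[k] S ≃ₗ[k] Aᵐᵒᵖ ⊗[k] S)

example (a : A) (s : S) : E (a ⊗ₜ s) = MulOpposite.op a ⊗ₜ s := rfl

lemma opMul_tmul (a b : A) (s u : S) :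
    opMul ((a ⊗ₜ[k] s) ⊗ₜ[k] (b ⊗ₜ[k] u)) = (b * a) ⊗ₜ[k] (s * u) := by
  simp [opMul, tensorTensorTensorComm_tmul, LinearMap.mul'_apply]

lemma E_opMul (x y : A ⊗[k] S) : E (opMul (x ⊗ₜ[k] y)) = E x * E y := by
  induction x using TensorProduct.induction_on with
  | zero => simp
  | add x₁ x₂ h₁ h₂ => simp [add_tmul, h₁, h₂, add_mul]
  | tmul a s =>
    induction y using TensorProduct.induction_on with
    | zero => simp
    | add y₁ y₂ h₁ h₂ => simp [tmul_add, h₁, h₂, mul_add]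
    | tmul b u =>
      simp [opMul_tmul, Algebra.TensorProduct.tmul_mul_tmul]

end Aux

set_option synthInstance.maxHeartbeats 400000
set_option maxHeartbeats 1000000

section Aux2

variable (R : S ⊗[k] A →ₗ[k] A ⊗[k] S) (χ : S →ₐ[k] k)

lemma factInner_tmul (t : S) (b : A) (u : S) :
    factInner R (t ⊗ₜ[k] (b ⊗ₜ[k] u)) =
      LinearMap.lTensor A (LinearMap.mulRight k u) (R (t ⊗ₜ[k] b)) := by
  simp only [factInner, LinearMap.coe_comp, Function.comp_apply, LinearEquiv.coe_coe,
    assoc_symm_tmul, LinearMap.rTensor_tmul]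
  generalize R (t ⊗ₜ[k] b) = z
  induction z using TensorProduct.induction_on with
  | zero => simp only [zero_tmul, map_zero]
  | add z₁ z₂ hz₁ hz₂ => simp only [add_tmul, map_add, hz₁, hz₂]
  | tmul a s =>
      simp [LinearMap.mul'_apply]

end Aux2

section Aux3

variable (R : S ⊗[k] A →ₗ[k] A ⊗[k] S) (χ : S →ₐ[k] k)

/-- `b ⊗ (c ⊗ v) ↦ (b c) ⊗ (v u)`. -/
def tailMap (u : S) : A ⊗[k] (A ⊗[k] S) →ₗ[k] A ⊗[k] S :=
  LinearMap.lTensor A (LinearMap.mulRight k u) ∘ₗ LinearMap.rTensor S (LinearMap.mul' k A) ∘ₗ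
    (TensorProduct.assoc k A A S).symm.toLinearMap

lemma tailMap_tmul (u : S) (b : A) (w : A ⊗[k] S) :
    tailMap (u := u) (b ⊗ₜ[k] w) = opMul (w ⊗ₜ[k] (b ⊗ₜ[k] u)) := by
  induction w using TensorProduct.induction_on with
  | zero => simp only [tmul_zero, zero_tmul, map_zero]
  | add w₁ w₂ h₁ h₂ => simp only [tmul_add, add_tmul, map_add, h₁, h₂]
  | tmul c v =>
    simp [tailMap, opMul_tmul, LinearMap.mul'_apply]

def psiMap (f : S →ₗ[k] A ⊗[k] S) (u : S) : A ⊗[k] S →ₗ[k] A ⊗[k] S :=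
  tailMap u ∘ₗ LinearMap.lTensor A f

lemma psiMap_tmul (f : S →ₗ[k] A ⊗[k] S) (u : S) (b : A) (t' : S) :
    psiMap f u (b ⊗ₜ[k] t') = opMul (f t' ⊗ₜ[k] (b ⊗ₜ[k] u)) := by
  simp [psiMap, tailMap_tmul]

lemma lTensor_mulRight_eq (x : A ⊗[k] S) (t : S) :
    LinearMap.lTensor A (LinearMap.mulRight k t) x = opMul (x ⊗ₜ[k] ((1 : A) ⊗ₜ[k] t)) := by
  induction x using TensorProduct.induction_on with
  | zero => simp only [map_zero, zero_tmul]
  | add x₁ x₂ h₁ h₂ => simp only [map_add, add_tmul, h₁, h₂]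
  | tmul a s => simp [opMul_tmul]

end Aux3

section Aux4

variable (R : S ⊗[k] A →ₗ[k] A ⊗[k] S) (χ : S →ₐ[k] k)

lemma factInner2_shift (a : A) (v : S) (b' : A) (t' : S) :
    LinearMap.lTensor A (LinearMap.mulRight k v) (factInner2 R a (b' ⊗ₜ[k] t')) =
      tailMap v (b' ⊗ₜ[k] R (t' ⊗ₜ[k] a)) := by
  simp [factInner2, tailMap]

lemma opMul_shift (w : A ⊗[k] S) (b' : A) (s u : S) :
    opMul ((LinearMap.lTensor A (LinearMap.mulRight k s) w) ⊗ₜ[k] (b' ⊗ₜ[k] u)) =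
      opMul (w ⊗ₜ[k] (b' ⊗ₜ[k] (s * u))) := by
  induction w using TensorProduct.induction_on with
  | zero => simp only [map_zero, zero_tmul]
  | add w₁ w₂ h₁ h₂ => simp only [map_add, add_tmul, h₁, h₂]
  | tmul c v => simp [opMul_tmul, mul_assoc]

lemma key1
    (h4 : ∀ (s : S) (a b : A),
      R (s ⊗ₜ[k] (a * b)) = factInner2 R b (R (s ⊗ₜ[k] a)))
    (t : S) (b : A) (u : S) (x : A ⊗[k] S) :
    factInner R (t ⊗ₜ[k] opMul (x ⊗ₜ[k] (b ⊗ₜ[k] u))) =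
      psiMap (factInner R ∘ₗ (TensorProduct.mk k S (A ⊗[k] S)).flip x) u (R (t ⊗ₜ[k] b)) := by
  induction x using TensorProduct.induction_on with
  | zero =>
    have h0 : (TensorProduct.mk k S (A ⊗[k] S)).flip (0 : A ⊗[k] S) = 0 := map_zero _
    simp only [h0, zero_tmul, map_zero, tmul_zero, psiMap, LinearMap.comp_zero,
      LinearMap.lTensor_zero, LinearMap.zero_comp, LinearMap.zero_apply]
  | add x₁ x₂ h₁ h₂ =>
    have ha : (TensorProduct.mk k S (A ⊗[k] S)).flip (x₁ + x₂) =
        (TensorProduct.mk k S (A ⊗[k] S)).flip x₁ +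
        (TensorProduct.mk k S (A ⊗[k] S)).flip x₂ := map_add _ _ _
    simp only [ha, add_tmul, map_add, tmul_add, psiMap, LinearMap.comp_add,
      LinearMap.lTensor_add, LinearMap.add_comp, LinearMap.add_apply, h₁, h₂]
  | tmul a s =>
    rw [opMul_tmul, factInner_tmul, h4]
    generalize R (t ⊗ₜ[k] b) = z
    induction z using TensorProduct.induction_on with
    | zero => simp only [map_zero]
    | add z₁ z₂ h₁ h₂ => simp only [map_add, h₁, h₂]
    | tmul b' t' =>
      rw [factInner2_shift, tailMap_tmul, psiMap_tmul]
      have hf : (factInner R ∘ₗ (TensorProduct.mk k S (A ⊗[k] S)).flip (a ⊗ₜ[k] s)) t' =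
          LinearMap.lTensor A (LinearMap.mulRight k s) (R (t' ⊗ₜ[k] a)) := by
        simp only [LinearMap.coe_comp, Function.comp_apply, LinearMap.flip_apply,
          TensorProduct.mk_apply]
        exact factInner_tmul R t' a s
      rw [hf, opMul_shift]

end Aux4

section Aux5

variable (R : S ⊗[k] A →ₗ[k] A ⊗[k] S) (χ : S →ₐ[k] k)

lemma lemA
    (h4 : ∀ (s : S) (a b : A),
      R (s ⊗ₜ[k] (a * b)) = factInner2 R b (R (s ⊗ₜ[k] a)))
    (q : A ⊗[k] S) (hq : factQCond R χ q) (t : S) (y : A ⊗[k] S) :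
    factInner R (t ⊗ₜ[k] opMul (q ⊗ₜ[k] y)) =
      opMul (q ⊗ₜ[k] LinearMap.rTensor S (factPhi R χ t) y) := by
  induction y using TensorProduct.induction_on with
  | zero => simp only [tmul_zero, map_zero]
  | add y₁ y₂ h₁ h₂ => simp only [tmul_add, map_add, h₁, h₂]
  | tmul b u =>
    rw [key1 R h4 t b u q]
    have hfq : (factInner R ∘ₗ (TensorProduct.mk k S (A ⊗[k] S)).flip q) =
        LinearMap.toSpanSingleton k (A ⊗[k] S) q ∘ₗ χ.toLinearMap := by
      ext t'
      simp only [LinearMap.coe_comp, Function.comp_apply, LinearMap.flip_apply,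
        TensorProduct.mk_apply, AlgHom.toLinearMap_apply, LinearMap.toSpanSingleton_apply]
      exact hq t'
    rw [hfq]
    have hr : LinearMap.rTensor S (factPhi R χ t) (b ⊗ₜ[k] u) = (factPhi R χ t b) ⊗ₜ[k] u :=
      rfl
    rw [hr]
    have hphi : factPhi R χ t b =
        (TensorProduct.rid k A) (LinearMap.lTensor A χ.toLinearMap (R (t ⊗ₜ[k] b))) := rfl
    rw [hphi]
    generalize R (t ⊗ₜ[k] b) = z
    induction z using TensorProduct.induction_on with
    | zero => simp only [map_zero, zero_tmul, tmul_zero]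
    | add z₁ z₂ h₁ h₂ => simp only [map_add, add_tmul, tmul_add, h₁, h₂]
    | tmul b' t' =>
      rw [psiMap_tmul]
      simp only [LinearMap.coe_comp, Function.comp_apply, AlgHom.toLinearMap_apply,
        LinearMap.toSpanSingleton_apply, LinearMap.lTensor_tmul, rid_tmul]
      rw [show (χ t' • q) ⊗ₜ[k] (b' ⊗ₜ[k] u) = χ t' • (q ⊗ₜ[k] (b' ⊗ₜ[k] u)) from
            (smul_tmul' _ _ _).symm,
          show (χ t' • b') ⊗ₜ[k] u = χ t' • (b' ⊗ₜ[k] u) from (smul_tmul' _ _ _).symm,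
          tmul_smul, map_smul]

end Aux5

section Aux6

variable (R : S ⊗[k] A →ₗ[k] A ⊗[k] S) (χ : S →ₐ[k] k)

/-- `t' ↦ χ(t'_R) b_R`, linear in `t'`. -/
def phiAt (b : A) : S →ₗ[k] A :=
  (TensorProduct.rid k A).toLinearMap ∘ₗ LinearMap.lTensor A χ.toLinearMap ∘ₗ
    R ∘ₗ (TensorProduct.mk k S A).flip b

lemma phiAt_apply (b : A) (t' : S) : phiAt R χ b t' = factPhi R χ t' b := rfl

lemma phi_mul
    (h4 : ∀ (s : S) (a b : A),
      R (s ⊗ₜ[k] (a * b)) = factInner2 R b (R (s ⊗ₜ[k] a)))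
    (t : S) (a b : A) :
    factPhi R χ t (a * b) =
      LinearMap.mul' k A (LinearMap.lTensor A (phiAt R χ b) (R (t ⊗ₜ[k] a))) := by
  have h0 : factPhi R χ t (a * b) =
      (TensorProduct.rid k A) (LinearMap.lTensor A χ.toLinearMap (R (t ⊗ₜ[k] (a * b)))) := rfl
  rw [h0, h4]
  generalize R (t ⊗ₜ[k] a) = z
  induction z using TensorProduct.induction_on with
  | zero => simp only [map_zero]
  | add z₁ z₂ h₁ h₂ => simp only [map_add, h₁, h₂]
  | tmul a' t' =>
    have h1 : factInner2 R b (a' ⊗ₜ[k] t') =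
        LinearMap.rTensor S (LinearMap.mul' k A)
          ((TensorProduct.assoc k A A S).symm (a' ⊗ₜ[k] R (t' ⊗ₜ[k] b))) := by
      simp [factInner2]
    rw [h1]
    have h2 : LinearMap.lTensor A (phiAt R χ b) (a' ⊗ₜ[k] t') =
        a' ⊗ₜ[k] phiAt R χ b t' := rfl
    rw [h2]
    have h3 : phiAt R χ b t' =
        (TensorProduct.rid k A) (LinearMap.lTensor A χ.toLinearMap (R (t' ⊗ₜ[k] b))) := rfl
    rw [h3]
    generalize R (t' ⊗ₜ[k] b) = w
    induction w using TensorProduct.induction_on with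
    | zero => simp only [map_zero, tmul_zero]
    | add w₁ w₂ h₁ h₂ => simp only [map_add, tmul_add, h₁, h₂]
    | tmul c v =>
      simp only [assoc_symm_tmul, LinearMap.rTensor_tmul, LinearMap.mul'_apply,
        LinearMap.lTensor_tmul, AlgHom.toLinearMap_apply, rid_tmul, tmul_smul, map_smul,
        mul_smul_comm, smul_tmul']
      simp [LinearMap.mul'_apply, Algebra.mul_smul_comm]

end Aux6

section Aux7

variable (R : S ⊗[k] A →ₗ[k] A ⊗[k] S) (χ : S →ₐ[k] k)

/-- `t' ↦ (rTensor (factPhi t')) w`, linear in `t'`. -/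
def psiBar (w : A ⊗[k] S) : S →ₗ[k] A ⊗[k] S :=
  LinearMap.rTensor S
      ((TensorProduct.rid k A).toLinearMap ∘ₗ LinearMap.lTensor A χ.toLinearMap ∘ₗ R) ∘ₗ
    (TensorProduct.assoc k S A S).symm.toLinearMap ∘ₗ (TensorProduct.mk k S (A ⊗[k] S)).flip w

lemma psiBar_apply (w : A ⊗[k] S) (t' : S) :
    psiBar R χ w t' = LinearMap.rTensor S (factPhi R χ t') w := by
  induction w using TensorProduct.induction_on with
  | zero =>
    have h0 : (TensorProduct.mk k S (A ⊗[k] S)).flip (0 : A ⊗[k] S) = 0 := map_zero _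
    simp only [psiBar, h0, LinearMap.comp_zero, LinearMap.zero_comp, LinearMap.zero_apply,
      map_zero]
  | add w₁ w₂ h₁ h₂ =>
    have ha : (TensorProduct.mk k S (A ⊗[k] S)).flip (w₁ + w₂) =
        (TensorProduct.mk k S (A ⊗[k] S)).flip w₁ +
        (TensorProduct.mk k S (A ⊗[k] S)).flip w₂ := map_add _ _ _
    simp only [psiBar, ha, LinearMap.comp_add, LinearMap.add_comp, LinearMap.add_apply,
      map_add] at h₁ h₂ ⊢
    rw [h₁, h₂]
  | tmul a0 s0 =>
    simp only [psiBar, LinearMap.coe_comp, Function.comp_apply, LinearMap.flip_apply,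
      TensorProduct.mk_apply, LinearEquiv.coe_coe, assoc_symm_tmul, LinearMap.rTensor_tmul]
    rfl

end Aux7

section Aux8

variable (R : S ⊗[k] A →ₗ[k] A ⊗[k] S) (χ : S →ₐ[k] k)

local notation "E" => (TensorProduct.congr (MulOpposite.opLinearEquiv k : A ≃ₗ[k] Aᵐᵒᵖ)
  (LinearEquiv.refl k S) : A ⊗[k] S ≃ₗ[k] Aᵐᵒᵖ ⊗[k] S)

lemma E_tmul (a : A) (s : S) : E (a ⊗ₜ[k] s) = MulOpposite.op a ⊗ₜ[k] s := rfl

/-- `t' ↦ opMul (w ⊗ (1 ⊗ t'))`. -/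
def psiL (w : A ⊗[k] S) : S →ₗ[k] A ⊗[k] S :=
  opMul ∘ₗ TensorProduct.mk k (A ⊗[k] S) (A ⊗[k] S) w ∘ₗ TensorProduct.mk k A S 1

lemma psiL_apply (w : A ⊗[k] S) (t' : S) :
    psiL w t' = opMul (w ⊗ₜ[k] ((1 : A) ⊗ₜ[k] t')) := rfl

lemma keyL (w : A ⊗[k] S) (t : S) (b : A) (u : S) :
    opMul (w ⊗ₜ[k] factInner R (t ⊗ₜ[k] (b ⊗ₜ[k] u))) =
      psiMap (psiL w) u (R (t ⊗ₜ[k] b)) := by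
  rw [factInner_tmul]
  generalize R (t ⊗ₜ[k] b) = z
  induction z using TensorProduct.induction_on with
  | zero => simp only [map_zero, tmul_zero]
  | add z₁ z₂ h₁ h₂ => simp only [map_add, tmul_add, h₁, h₂]
  | tmul b' t' =>
    rw [psiMap_tmul, psiL_apply]
    have hl : LinearMap.lTensor A (LinearMap.mulRight k u) (b' ⊗ₜ[k] t') =
        b' ⊗ₜ[k] (t' * u) := rfl
    rw [hl]
    apply (TensorProduct.congr (MulOpposite.opLinearEquiv k : A ≃ₗ[k] Aᵐᵒᵖ)
      (LinearEquiv.refl k S)).injective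
    rw [E_opMul, E_opMul, E_opMul, mul_assoc]
    congr 1
    rw [E_tmul, E_tmul, E_tmul, Algebra.TensorProduct.tmul_mul_tmul,
      ← MulOpposite.op_mul, mul_one]

lemma keyR
    (h4 : ∀ (s : S) (a b : A),
      R (s ⊗ₜ[k] (a * b)) = factInner2 R b (R (s ⊗ₜ[k] a)))
    (w : A ⊗[k] S) (t : S) (b : A) (u : S) :
    LinearMap.rTensor S (factPhi R χ t) (opMul (w ⊗ₜ[k] (b ⊗ₜ[k] u))) =
      psiMap (psiBar R χ w) u (R (t ⊗ₜ[k] b)) := by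
  induction w using TensorProduct.induction_on with
  | zero =>
    have h0 : (TensorProduct.mk k S (A ⊗[k] S)).flip (0 : A ⊗[k] S) = 0 := map_zero _
    simp only [zero_tmul, map_zero, psiBar, h0, LinearMap.comp_zero, LinearMap.zero_comp,
      psiMap, LinearMap.lTensor_zero, LinearMap.zero_apply]
  | add w₁ w₂ h₁ h₂ =>
    have ha : (TensorProduct.mk k S (A ⊗[k] S)).flip (w₁ + w₂) =
        (TensorProduct.mk k S (A ⊗[k] S)).flip w₁ +
        (TensorProduct.mk k S (A ⊗[k] S)).flip w₂ := map_add _ _ _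
    simp only [add_tmul, map_add, psiBar, ha, LinearMap.comp_add, LinearMap.add_comp,
      psiMap, LinearMap.lTensor_add, LinearMap.add_apply, h₁, h₂]
  | tmul a0 s0 =>
    rw [opMul_tmul]
    have hr : LinearMap.rTensor S (factPhi R χ t) ((b * a0) ⊗ₜ[k] (s0 * u)) =
        (factPhi R χ t (b * a0)) ⊗ₜ[k] (s0 * u) := rfl
    rw [hr, phi_mul R χ h4]
    generalize R (t ⊗ₜ[k] b) = z
    induction z using TensorProduct.induction_on with
    | zero => simp only [map_zero, zero_tmul]
    | add z₁ z₂ h₁ h₂ => simp only [map_add, add_tmul, h₁, h₂]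
    | tmul b' t' =>
      rw [psiMap_tmul, psiBar_apply]
      have h2 : LinearMap.lTensor A (phiAt R χ a0) (b' ⊗ₜ[k] t') =
          b' ⊗ₜ[k] phiAt R χ a0 t' := rfl
      have h3 : LinearMap.rTensor S (factPhi R χ t') (a0 ⊗ₜ[k] s0) =
          (factPhi R χ t' a0) ⊗ₜ[k] s0 := rfl
      rw [h2, h3, opMul_tmul, phiAt_apply, LinearMap.mul'_apply]

end Aux8

section Aux9

variable (R : S ⊗[k] A →ₗ[k] A ⊗[k] S) (χ : S →ₐ[k] k)

lemma lemB
    (h4 : ∀ (s : S) (a b : A),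
      R (s ⊗ₜ[k] (a * b)) = factInner2 R b (R (s ⊗ₜ[k] a)))
    (qbar : A ⊗[k] S)
    (hw : ∀ t : S, LinearMap.rTensor S (factPhi R χ t) qbar =
      LinearMap.lTensor A (LinearMap.mulRight k t) qbar)
    (t : S) (x : A ⊗[k] S) :
    opMul (qbar ⊗ₜ[k] factInner R (t ⊗ₜ[k] x)) =
      LinearMap.rTensor S (factPhi R χ t) (opMul (qbar ⊗ₜ[k] x)) := by
  induction x using TensorProduct.induction_on with
  | zero => simp only [tmul_zero, map_zero]
  | add x₁ x₂ h₁ h₂ => simp only [tmul_add, map_add, h₁, h₂]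
  | tmul b u =>
    rw [keyL, keyR R χ h4]
    have hfeq : psiL qbar = psiBar R χ qbar := by
      ext t'
      rw [psiL_apply, psiBar_apply, hw t', lTensor_mulRight_eq]
    rw [hfeq]

lemma factPhi_one
    (h1 : ∀ s : S, R (s ⊗ₜ[k] (1 : A)) = (1 : A) ⊗ₜ[k] s) (t : S) :
    factPhi R χ t (1 : A) = χ t • (1 : A) := by
  have h0 : factPhi R χ t (1 : A) =
      (TensorProduct.rid k A) (LinearMap.lTensor A χ.toLinearMap (R (t ⊗ₜ[k] (1 : A)))) := rfl
  rw [h0, h1]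
  simp

end Aux9

section Final

local notation "𝓔" => (TensorProduct.congr (MulOpposite.opLinearEquiv k : A ≃ₗ[k] Aᵐᵒᵖ)
  (LinearEquiv.refl k S) : A ⊗[k] S ≃ₗ[k] Aᵐᵒᵖ ⊗[k] S)

lemma cancel_left (q qbar x y : A ⊗[k] S)
    (hinv1 : opMul (qbar ⊗ₜ[k] q) = (1 : A) ⊗ₜ[k] (1 : S))
    (h : opMul (q ⊗ₜ[k] x) = opMul (q ⊗ₜ[k] y)) : x = y := by
  have hq1 : 𝓔 qbar * 𝓔 q = 1 := by
    rw [← E_opMul, hinv1]; rfl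
  apply (TensorProduct.congr (MulOpposite.opLinearEquiv k : A ≃ₗ[k] Aᵐᵒᵖ)
    (LinearEquiv.refl k S)).injective
  calc 𝓔 x = (𝓔 qbar * 𝓔 q) * 𝓔 x := by rw [hq1, one_mul]
    _ = 𝓔 qbar * 𝓔 (opMul (q ⊗ₜ[k] x)) := by rw [mul_assoc, E_opMul]
    _ = 𝓔 qbar * 𝓔 (opMul (q ⊗ₜ[k] y)) := by rw [h]
    _ = (𝓔 qbar * 𝓔 q) * 𝓔 y := by rw [mul_assoc, E_opMul]
    _ = 𝓔 y := by rw [hq1, one_mul]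

/-- For `q ∈ A ⊗ S` invertible in `A^op ⊗ S` with inverse `q̄`, the following are
equivalent: (1) `q ∈ Q`; (2) `Σ (a_j)_R ā_i ⊗ s̄_i t_R s_j = χ(t)(1 ⊗ 1)`;
(3) `Σ χ(t_R)(ā_j)_R ⊗ s̄_j = Σ ā_j ⊗ s̄_j t`. -/
theorem cleft_factorization_tfae (R : S ⊗[k] A →ₗ[k] A ⊗[k] S)
    (h1 : ∀ s : S, R (s ⊗ₜ[k] (1 : A)) = (1 : A) ⊗ₜ[k] s)
    (h2 : ∀ a : A, R ((1 : S) ⊗ₜ[k] a) = a ⊗ₜ[k] (1 : S))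
    (h3 : ∀ (s t : S) (a : A),
      R ((s * t) ⊗ₜ[k] a) = factInner R (s ⊗ₜ[k] R (t ⊗ₜ[k] a)))
    (h4 : ∀ (s : S) (a b : A),
      R (s ⊗ₜ[k] (a * b)) = factInner2 R b (R (s ⊗ₜ[k] a)))
    (χ : S →ₐ[k] k) (q qbar : A ⊗[k] S)
    (hinv1 : opMul (qbar ⊗ₜ[k] q) = (1 : A) ⊗ₜ[k] (1 : S))
    (hinv2 : opMul (q ⊗ₜ[k] qbar) = (1 : A) ⊗ₜ[k] (1 : S)) :
    -- (1) ↔ (2)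
    ((factQCond R χ q ↔
      (∀ t : S, opMul (qbar ⊗ₜ[k] factInner R (t ⊗ₜ[k] q)) =
        χ t • ((1 : A) ⊗ₜ[k] (1 : S))))) ∧
    -- (2) ↔ (3)
    ((∀ t : S, opMul (qbar ⊗ₜ[k] factInner R (t ⊗ₜ[k] q)) =
        χ t • ((1 : A) ⊗ₜ[k] (1 : S))) ↔
      (∀ t : S, LinearMap.rTensor S (factPhi R χ t) qbar =
        LinearMap.lTensor A (LinearMap.mulRight k t) qbar)) := by
  have hE1 : 𝓔 ((1 : A) ⊗ₜ[k] (1 : S)) = 1 := rfl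
  have hq1 : 𝓔 qbar * 𝓔 q = 1 := by rw [← E_opMul, hinv1, hE1]
  have hq2 : 𝓔 q * 𝓔 qbar = 1 := by rw [← E_opMul, hinv2, hE1]
  have iff12 : factQCond R χ q ↔
      (∀ t : S, opMul (qbar ⊗ₜ[k] factInner R (t ⊗ₜ[k] q)) =
        χ t • ((1 : A) ⊗ₜ[k] (1 : S))) := by
    constructor
    · intro hq t
      rw [hq t, tmul_smul, map_smul, hinv1]
    · intro hB t
      apply (TensorProduct.congr (MulOpposite.opLinearEquiv k : A ≃ₗ[k] Aᵐᵒᵖ)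
        (LinearEquiv.refl k S)).injective
      calc 𝓔 (factInner R (t ⊗ₜ[k] q))
          = (𝓔 q * 𝓔 qbar) * 𝓔 (factInner R (t ⊗ₜ[k] q)) := by rw [hq2, one_mul]
        _ = 𝓔 q * 𝓔 (opMul (qbar ⊗ₜ[k] factInner R (t ⊗ₜ[k] q))) := by
            rw [mul_assoc, E_opMul]
        _ = 𝓔 q * 𝓔 (χ t • ((1 : A) ⊗ₜ[k] (1 : S))) := by rw [hB t]
        _ = χ t • (𝓔 q * 1) := by rw [map_smul, hE1, mul_smul_comm]
        _ = 𝓔 (χ t • q) := by rw [mul_one, map_smul]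
  refine ⟨iff12, ?_, ?_⟩
  · intro hB t
    have hQ : factQCond R χ q := iff12.mpr hB
    have key := lemA R χ h4 q hQ t qbar
    rw [hinv2] at key
    have hL : factInner R (t ⊗ₜ[k] ((1 : A) ⊗ₜ[k] (1 : S))) = (1 : A) ⊗ₜ[k] t := by
      rw [factInner_tmul, h1]
      simp
    rw [hL] at key
    have key2 : opMul (q ⊗ₜ[k] LinearMap.lTensor A (LinearMap.mulRight k t) qbar) =
        (1 : A) ⊗ₜ[k] t := by
      rw [lTensor_mulRight_eq]
      apply (TensorProduct.congr (MulOpposite.opLinearEquiv k : A ≃ₗ[k] Aᵐᵒᵖ)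
        (LinearEquiv.refl k S)).injective
      rw [E_opMul, E_opMul, ← mul_assoc, hq2, one_mul]
    exact cancel_left q qbar _ _ hinv1 (key.symm.trans key2.symm)
  · intro h3' t
    rw [lemB R χ h4 qbar h3' t q, hinv1]
    have hr : LinearMap.rTensor S (factPhi R χ t) ((1 : A) ⊗ₜ[k] (1 : S)) =
        (factPhi R χ t (1 : A)) ⊗ₜ[k] (1 : S) := rfl
    rw [hr, factPhi_one R χ h1, ← smul_tmul']


end Final

end
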